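/- Let α > 0, β > 0 and ξ < −2√(3αβ), and let k₁ = ((−ξ + √(ξ² − 12αβ))/(24α))^{1/2} be the largest real zero of θ′(·, ξ). Then there exist φ₀ ∈ (0, π/2) and C > 0 (depending on α, β, ξ) such that for all real u ≥ 0 and 0 ≤ v ≤ u·tan φ₀, one has Im θ(k₁ + u + iv, ξ) ≥ C·u·v and Im θ(k₁ + u − iv, ξ) ≤ −C·u·v. -/

import Mathlib

/-- The phase function `θ(k, ξ) = kξ + 4αk³ − β/(4k)` for `k ∈ ℂ ∖ {0}`. -/
noncomputable def theta (α β ξ : ℝ) (k : ℂ) : ℂ :=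
  k * (ξ : ℂ) + 4 * (α : ℂ) * k ^ 3 - (β : ℂ) / (4 * k)

/-- The largest real zero `k₁` of `θ′(·, ξ)` when `α, β > 0` and `ξ < −2√(3αβ)`. -/
noncomputable def k1def (α β ξ : ℝ) : ℝ :=
  Real.sqrt ((-ξ + Real.sqrt (ξ ^ 2 - 12 * α * β)) / (24 * α))

lemma im_theta (α β ξ x y : ℝ) (h : x^2 + y^2 ≠ 0) :
    (theta α β ξ ((x:ℂ) + (y:ℂ) * Complex.I)).im
      = y * (ξ + 12*α*x^2 - 4*α*y^2 + β/(4*(x^2+y^2))) := by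
  have h2 : x*x + y*y ≠ 0 := by rw [← pow_two x, ← pow_two y]; exact h
  simp only [theta, Complex.div_im, Complex.normSq_apply, Complex.add_re, Complex.add_im,
    Complex.mul_re, Complex.mul_im, Complex.sub_im, Complex.sub_re, Complex.I_re, Complex.I_im,
    Complex.ofReal_re, Complex.ofReal_im, pow_succ, pow_zero, one_mul]
  have h3 : y^2*16 + x^2*16 ≠ 0 := by intro hc; apply h; linarith
  norm_num only [Complex.re_ofNat, Complex.im_ofNat]
  field_simp [h2, h3]
  linear_combination (y*β) * inv_mul_cancel₀ h3

set_option maxHeartbeats 1000000 in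
/-- Sign estimates for `Im θ` in narrow sectors emanating to the right of the largest
saddle point `k₁`. -/
theorem stmt13 (α β ξ : ℝ) (hα : 0 < α) (hβ : 0 < β)
    (hξ : ξ < -2 * Real.sqrt (3 * α * β)) :
    ∃ φ₀ : ℝ, 0 < φ₀ ∧ φ₀ < Real.pi / 2 ∧ ∃ C : ℝ, 0 < C ∧
      ∀ u v : ℝ, 0 ≤ u → 0 ≤ v → v ≤ u * Real.tan φ₀ →
        C * u * v
            ≤ (theta α β ξ ((k1def α β ξ : ℂ) + (u : ℂ) + (v : ℂ) * Complex.I)).im ∧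
        (theta α β ξ ((k1def α β ξ : ℂ) + (u : ℂ) - (v : ℂ) * Complex.I)).im
            ≤ -(C * u * v) := by
  have h3ab : (0:ℝ) < 3 * α * β := by positivity
  have hr := Real.sqrt_nonneg (3 * α * β)
  have hr2 := Real.sq_sqrt h3ab.le
  have hξneg : ξ < 0 := by nlinarith [Real.sqrt_pos.mpr h3ab]
  have hsq : 12 * α * β < ξ ^ 2 := by nlinarith
  obtain ⟨s, hsdef⟩ : ∃ s : ℝ, s = Real.sqrt (ξ ^ 2 - 12 * α * β) := ⟨_, rfl⟩
  have hs0 : 0 < s := hsdef ▸ Real.sqrt_pos.mpr (by linarith)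
  have hs2 : s ^ 2 = ξ ^ 2 - 12 * α * β := hsdef ▸ Real.sq_sqrt (by linarith)
  obtain ⟨k1, hk1d⟩ : ∃ k : ℝ, k = k1def α β ξ := ⟨_, rfl⟩
  have harg : 0 < (-ξ + s) / (24 * α) := div_pos (by linarith) (by linarith)
  have hk10 : 0 < k1 := by
    rw [hk1d, k1def, ← hsdef]; exact Real.sqrt_pos.mpr harg
  have hk1sq : k1 ^ 2 = (-ξ + s) / (24 * α) := by
    rw [hk1d, k1def, ← hsdef]; exact Real.sq_sqrt harg.le
  have hk2 : (0:ℝ) < k1 ^ 2 := by positivity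
  have hk4 : (0:ℝ) < k1 ^ 4 := by positivity
  -- k1 is a critical point
  have hθ' : ξ + 12 * α * k1 ^ 2 + β / (4 * k1 ^ 2) = 0 := by
    rw [hk1sq]
    have h1 : (-ξ + s) ≠ 0 := (by linarith : (0:ℝ) < -ξ + s).ne'
    field_simp
    linear_combination 48 * hs2
  obtain ⟨B, hBdef⟩ : ∃ B : ℝ, B = β / (4 * k1 ^ 4) := ⟨_, rfl⟩
  have hBpos : 0 < B := hBdef ▸ by positivity
  have hBlt : B < 12 * α := by
    have hk14 : 576 * α ^ 2 * k1 ^ 4 = (-ξ + s) ^ 2 := by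
      have h5 : k1 ^ 4 = ((-ξ + s) / (24 * α)) ^ 2 := by rw [← hk1sq]; ring
      rw [h5]; field_simp; ring
    have hss : 0 < s * (s - ξ) := mul_pos hs0 (by linarith)
    rw [hBdef, div_lt_iff₀ (by positivity)]
    nlinarith [hk14, hs2, hss, sq_nonneg (-ξ + s)]
  obtain ⟨δ, hδdef⟩ : ∃ d : ℝ, d = 12 * α - B := ⟨_, rfl⟩
  have hδpos : 0 < δ := by rw [hδdef]; linarith
  obtain ⟨t, htdef⟩ : ∃ t : ℝ, t = Real.sqrt (δ / (16 * α)) := ⟨_, rfl⟩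
  have ht0 : 0 < t := htdef ▸ Real.sqrt_pos.mpr (by positivity)
  have ht2 : 16 * α * t ^ 2 ≤ δ := by
    rw [htdef, Real.sq_sqrt (show (0:ℝ) ≤ δ / (16 * α) by positivity),
      mul_div_cancel₀ _ (by positivity : (16:ℝ) * α ≠ 0)]
  refine ⟨Real.arctan t, Real.arctan_zero ▸ Real.arctan_strictMono ht0,
    Real.arctan_lt_pi_div_two t, 2 * k1 * δ, by positivity, ?_⟩
  intro u v hu hv0 hv
  rw [Real.tan_arctan] at hv
  obtain ⟨x, hxdef⟩ : ∃ x : ℝ, x = k1 + u := ⟨_, rfl⟩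
  have hx0 : 0 < x := by rw [hxdef]; linarith
  have hP : 0 < x ^ 2 + v ^ 2 := by positivity
  have hPk : k1 ^ 2 ≤ x ^ 2 + v ^ 2 := by nlinarith
  -- the key scalar inequality
  have hg : 2 * k1 * δ * u ≤ ξ + 12 * α * x ^ 2 - 4 * α * v ^ 2 + β / (4 * (x ^ 2 + v ^ 2)) := by
    have hident : β / (4 * (x ^ 2 + v ^ 2)) - (β / (4 * k1 ^ 2) - B * (x ^ 2 + v ^ 2 - k1 ^ 2))
        = β * (x ^ 2 + v ^ 2 - k1 ^ 2) ^ 2 / (4 * k1 ^ 4 * (x ^ 2 + v ^ 2)) := by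
      rw [hBdef]
      field_simp [hP.ne', hk10.ne']
      ring
    have hfrac : β / (4 * k1 ^ 2) - B * (x ^ 2 + v ^ 2 - k1 ^ 2)
        ≤ β / (4 * (x ^ 2 + v ^ 2)) := by
      have h6 : (0:ℝ) ≤ β * (x ^ 2 + v ^ 2 - k1 ^ 2) ^ 2 / (4 * k1 ^ 4 * (x ^ 2 + v ^ 2)) := by
        positivity
      linarith
    have hv2 : v ^ 2 ≤ t ^ 2 * u ^ 2 := by
      nlinarith [mul_le_mul hv hv hv0 (mul_nonneg hu ht0.le)]
    have hpoly : 2 * k1 * δ * u ≤ 12 * α * x ^ 2 - 12 * α * k1 ^ 2 - 4 * α * v ^ 2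
        - B * (x ^ 2 + v ^ 2 - k1 ^ 2) := by
      have h1 : (4 * α + B) * v ^ 2 ≤ (4 * α + B) * (t ^ 2 * u ^ 2) :=
        mul_le_mul_of_nonneg_left hv2 (by positivity)
      have h2 : 16 * α * t ^ 2 * u ^ 2 ≤ δ * u ^ 2 :=
        mul_le_mul_of_nonneg_right ht2 (sq_nonneg u)
      have h3 : (4 * α + B) * (t ^ 2 * u ^ 2) ≤ 16 * α * t ^ 2 * u ^ 2 := by
        nlinarith [sq_nonneg (t * u)]
      have hexp : 12 * α * x ^ 2 - 12 * α * k1 ^ 2 - 4 * α * v ^ 2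
          - B * (x ^ 2 + v ^ 2 - k1 ^ 2) - 2 * k1 * δ * u
          = δ * u ^ 2 - (4 * α + B) * v ^ 2 := by
        rw [hxdef, hδdef]; ring
      linarith
    have hξeq : ξ = -(12 * α * k1 ^ 2) - β / (4 * k1 ^ 2) := by linarith
    rw [hξeq]
    linarith
  have hCg := mul_le_mul_of_nonneg_left hg hv0
  constructor
  · have e1 : (↑(k1def α β ξ) : ℂ) + (u : ℂ) + (v : ℂ) * Complex.I
        = ((x : ℝ) : ℂ) + ((v : ℝ) : ℂ) * Complex.I := by
      rw [hxdef, hk1d]; push_cast; ring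
    rw [e1, im_theta α β ξ x v hP.ne']
    nlinarith [hCg]
  · have e2 : (↑(k1def α β ξ) : ℂ) + (u : ℂ) - (v : ℂ) * Complex.I
        = ((x : ℝ) : ℂ) + ((-v : ℝ) : ℂ) * Complex.I := by
      rw [hxdef, hk1d]; push_cast; ring
    have hP' : x ^ 2 + (-v) ^ 2 ≠ 0 := by
      have : x ^ 2 + (-v) ^ 2 = x ^ 2 + v ^ 2 := by ring
      rw [this]; exact hP.ne'
    rw [e2, im_theta α β ξ x (-v) hP']
    have hsq' : (-v : ℝ) ^ 2 = v ^ 2 := by ring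
    rw [hsq']
    nlinarith [hCg]
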